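/- For a Q-metric space (X,d) over a continuous quantale, the closure of a subset A ⊆ X with respect to the open ball topology τ_d equals {y ∈ X | for all δ ≪ 1 there exists x ∈ A with δ ≪ d(y,x)}. -/

import Mathlib

def wayBelow {Q : Type*} [CompleteLattice Q] (x y : Q) : Prop :=
  ∀ D : Set Q, D.Nonempty → DirectedOn (· ≤ ·) D → y ≤ sSup D → ∃ d ∈ D, x ≤ d

def ContinuousLattice (Q : Type*) [CompleteLattice Q] : Prop :=
  ∀ y : Q, y = sSup {x : Q | wayBelow x y}

/-- Open ball for a quantale-valued metric. -/
def ball {Q : Type*} [CompleteLattice Q] {X : Type*} (d : X → X → Q) (x : X) (δ : Q) :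
    Set X := {y : X | wayBelow δ (d x y)}

/-- The open ball topology. -/
def ballTopology {Q : Type*} [Monoid Q] [CompleteLattice Q] {X : Type*}
    (d : X → X → Q) : TopologicalSpace X :=
  TopologicalSpace.generateFrom {B : Set X | ∃ x δ, wayBelow δ (1 : Q) ∧ B = ball d x δ}

/-!
Every ball `ball d y ε` with `ε ≪ 1` is open and contains `y`, and conversely every open set
contains such a ball around each of its points, so these balls form a neighbourhood basis at `y`
and the closure is read off from it. The converse reduces to subbasic open sets: if
`δ ≪ d x y`, interpolate `δ ≪ δ' ≪ d x y`; since `d x y = ⨆_{ε ≪ 1} d x y * ε` is a directed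
supremum, `δ' ≤ d x y * ε` for some `ε ≪ 1`, and the triangle inequality puts `ball d y ε`
inside `ball d x δ`.
-/

open Filter Topology

namespace wayBelow

variable {Q : Type*} [CompleteLattice Q] {a a' b b' c : Q}

theorem le (h : wayBelow a b) : a ≤ b := by
  obtain ⟨c, hc, hac⟩ :=
    h {b} (Set.singleton_nonempty b) (directedOn_singleton b) sSup_singleton.ge
  rwa [Set.mem_singleton_iff.mp hc] at hac

theorem bot_left : wayBelow (⊥ : Q) b := fun _ hD _ _ ↦ ⟨hD.some, hD.some_mem, bot_le⟩

theorem mono_left (h : a ≤ a') (h' : wayBelow a' b) : wayBelow a b := fun D hne hdir hle ↦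
  let ⟨c, hc, hac⟩ := h' D hne hdir hle
  ⟨c, hc, h.trans hac⟩

theorem mono_right (h : wayBelow a b) (h' : b ≤ b') : wayBelow a b' := fun D hne hdir hle ↦
  h D hne hdir (h'.trans hle)

theorem sup (ha : wayBelow a c) (hb : wayBelow b c) : wayBelow (a ⊔ b) c := by
  intro D hne hdir hle
  obtain ⟨x, hx, hax⟩ := ha D hne hdir hle
  obtain ⟨y, hy, hby⟩ := hb D hne hdir hle
  obtain ⟨z, hz, hxz, hyz⟩ := hdir x hx y hy
  exact ⟨z, hz, sup_le (hax.trans hxz) (hby.trans hyz)⟩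

end wayBelow

section ContinuousLattice

variable {Q : Type*} [CompleteLattice Q]

theorem directedOn_wayBelow (b : Q) : DirectedOn (· ≤ ·) {x : Q | wayBelow x b} :=
  fun x hx y hy ↦ ⟨x ⊔ y, hx.sup hy, le_sup_left, le_sup_right⟩

theorem exists_wayBelow_wayBelow (hcont : ContinuousLattice Q) {a b : Q} (h : wayBelow a b) :
    ∃ c, wayBelow a c ∧ wayBelow c b := by
  set D : Set Q := {u | ∃ v, wayBelow u v ∧ wayBelow v b}
  have hne : D.Nonempty := ⟨⊥, ⊥, wayBelow.bot_left, wayBelow.bot_left⟩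
  have hdir : DirectedOn (· ≤ ·) D := by
    rintro u₁ ⟨v₁, hu₁, hv₁⟩ u₂ ⟨v₂, hu₂, hv₂⟩
    exact ⟨u₁ ⊔ u₂, ⟨v₁ ⊔ v₂, (hu₁.mono_right le_sup_left).sup (hu₂.mono_right le_sup_right),
      hv₁.sup hv₂⟩, le_sup_left, le_sup_right⟩
  -- `b = ⨆_{v ≪ b} v = ⨆_{v ≪ b} ⨆_{u ≪ v} u`, and every such `u` lies in `D`
  have hle : b ≤ sSup D := by
    rw [hcont b]
    refine sSup_le fun v hv ↦ ?_
    rw [hcont v]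
    exact sSup_le fun u hu ↦ le_sSup ⟨v, hu, hv⟩
  obtain ⟨u, ⟨v, huv, hvb⟩, hau⟩ := h D hne hdir hle
  exact ⟨v, huv.mono_left hau, hvb⟩

end ContinuousLattice

theorem exists_wayBelow_one_le_mul {Q : Type*} [Monoid Q] [CompleteLattice Q] [IsQuantale Q]
    (hcont : ContinuousLattice Q) {a b : Q} (h : wayBelow a b) :
    ∃ ε, wayBelow ε (1 : Q) ∧ a ≤ b * ε := by
  have hdir : DirectedOn (· ≤ ·) ((b * ·) '' {ε : Q | wayBelow ε 1}) :=
    directedOn_image.mpr <| (directedOn_wayBelow 1).mono fun _ _ h ↦ mul_le_mul_right h b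
  have hle : b ≤ sSup ((b * ·) '' {ε : Q | wayBelow ε 1}) := by
    rw [sSup_image, ← mul_sSup_distrib, ← hcont 1, mul_one]
  obtain ⟨_, ⟨ε, hε, rfl⟩, haε⟩ :=
    h _ (Set.Nonempty.image _ ⟨⊥, wayBelow.bot_left⟩) hdir hle
  exact ⟨ε, hε, haε⟩

section BallTopology

variable {Q : Type*} [Monoid Q] [CompleteLattice Q] {X : Type*} (d : X → X → Q)

theorem isOpen_ball {x : X} {δ : Q} (hδ : wayBelow δ 1) : IsOpen[ballTopology d] (ball d x δ) :=
  TopologicalSpace.isOpen_generateFrom_of_mem ⟨x, δ, hδ, rfl⟩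

theorem mem_ball_self (hrefl : ∀ x : X, (1 : Q) ≤ d x x) {x : X} {δ : Q} (hδ : wayBelow δ 1) :
    x ∈ ball d x δ :=
  hδ.mono_right (hrefl x)

variable [IsQuantale Q]

theorem exists_ball_subset_ball (hcont : ContinuousLattice Q)
    (htri : ∀ x y z : X, d x y * d y z ≤ d x z) {x y : X} {δ : Q} (h : y ∈ ball d x δ) :
    ∃ ε, wayBelow ε (1 : Q) ∧ ball d y ε ⊆ ball d x δ := by
  obtain ⟨δ', hδδ', hδ'⟩ := exists_wayBelow_wayBelow hcont h
  obtain ⟨ε, hε, hδ'ε⟩ := exists_wayBelow_one_le_mul hcont hδ'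
  refine ⟨ε, hε, fun z hz ↦ hδδ'.mono_right ?_⟩
  calc δ' ≤ d x y * ε := hδ'ε
    _ ≤ d x y * d y z := mul_le_mul_right (wayBelow.le hz) _
    _ ≤ d x z := htri x y z

theorem exists_ball_subset_of_isOpen (hcont : ContinuousLattice Q)
    (htri : ∀ x y z : X, d x y * d y z ≤ d x z) {U : Set X} (hU : IsOpen[ballTopology d] U)
    {y : X} (hy : y ∈ U) : ∃ ε, wayBelow ε (1 : Q) ∧ ball d y ε ⊆ U := by
  induction hU generalizing y with
  | basic B hB =>
    obtain ⟨x, δ, -, rfl⟩ := hB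
    exact exists_ball_subset_ball d hcont htri hy
  | univ => exact ⟨⊥, wayBelow.bot_left, Set.subset_univ _⟩
  | inter U V _ _ ihU ihV =>
    obtain ⟨ε₁, hε₁, hU⟩ := ihU hy.1
    obtain ⟨ε₂, hε₂, hV⟩ := ihV hy.2
    exact ⟨ε₁ ⊔ ε₂, hε₁.sup hε₂, fun z hz ↦
      ⟨hU (wayBelow.mono_left le_sup_left hz), hV (wayBelow.mono_left le_sup_right hz)⟩⟩
  | sUnion S _ ih =>
    obtain ⟨t, htS, hyt⟩ := hy
    obtain ⟨ε, hε, hsub⟩ := ih t htS hyt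
    exact ⟨ε, hε, hsub.trans (Set.subset_sUnion_of_mem htS)⟩

theorem hasBasis_nhds_ball (hcont : ContinuousLattice Q) (hrefl : ∀ x : X, (1 : Q) ≤ d x x)
    (htri : ∀ x y z : X, d x y * d y z ≤ d x z) (y : X) :
    (@nhds X (ballTopology d) y).HasBasis (fun ε : Q ↦ wayBelow ε 1) (ball d y) := by
  let := ballTopology d
  refine ⟨fun t ↦ ⟨fun ht ↦ ?_, fun ⟨ε, hε, hsub⟩ ↦ ?_⟩⟩
  · obtain ⟨U, hUt, hU, hyU⟩ := mem_nhds_iff.mp ht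
    obtain ⟨ε, hε, hsub⟩ := exists_ball_subset_of_isOpen d hcont htri hU hyU
    exact ⟨ε, hε, hsub.trans hUt⟩
  · exact mem_of_superset ((isOpen_ball d hε).mem_nhds (mem_ball_self d hrefl hε)) hsub

end BallTopology

theorem ballTopology_closure {Q : Type*} [Monoid Q] [CompleteLattice Q] [IsQuantale Q]
    (hcont : ContinuousLattice Q) {X : Type*} (d : X → X → Q)
    (hrefl : ∀ x : X, (1 : Q) ≤ d x x)
    (htri : ∀ x y z : X, d x y * d y z ≤ d x z) (A : Set X) :
    @closure X (ballTopology d) A =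
      {y : X | ∀ δ : Q, wayBelow δ (1 : Q) → ∃ x ∈ A, wayBelow δ (d y x)} := by
  let := ballTopology d
  ext y
  exact mem_closure_iff_nhds_basis (hasBasis_nhds_ball d hcont hrefl htri y)
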